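/- Let I be a Borel-fixed monomial ideal in R = k[x_1,...,x_r] and suppose Q = (x_1,...,x_t) is a maximal associated prime of R/I. Then the images of x_{t+1},...,x_r form a maximal R/I-regular sequence in the ideal (x_1,...,x_r). -/

import Mathlib

/-!
Since `Q = (x_1, …, x_t)` is maximal among the associated primes of `R/I`, no monomial
`x^m ∉ I` is killed by `Q` and by some `x_j` with `j > t`: its annihilator would lie in an
associated prime containing `Q + (x_j)`. Borel-fixedness turns `x_j x^m ∈ I` into
`x_i x^m ∈ I` for every `i ≤ j`, so `x_j` is a nonzerodivisor on the monomials of `R/I`, and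
hence on `R/(I + (x_{t+1}, …, x_{j-1}))`, which is again a monomial ideal.

For maximality, a monomial witnessing `Q ∈ Ass(R/I)` is pushed by Borel moves into the
variables `x_1, …, x_t`. The result lies outside `I + (x_{t+1}, …, x_r)` and is killed by every
variable modulo it, so every element of `(x_1, …, x_r)` is a zero divisor there.
-/

open MvPolynomial RingTheory.Sequence

section QuotientRegular

variable {R : Type*} [CommRing R]

theorem Ideal.Quotient.mk_mem_smul_top_iff (I J : Ideal R) (f : R) :
    Ideal.Quotient.mk I f ∈ J • (⊤ : Submodule R (R ⧸ I)) ↔ f ∈ I ⊔ J := by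
  rw [Ideal.smul_top_eq_map, Submodule.restrictScalars_mem, Ideal.Quotient.algebraMap_eq,
    ← Ideal.mem_comap, Ideal.comap_map_of_surjective _ Ideal.Quotient.mk_surjective,
    ← RingHom.ker_eq_comap_bot, Ideal.mk_ker, sup_comm]

theorem Ideal.Quotient.isSMulRegular_quotient_smul_top_iff (I J : Ideal R) (x : R) :
    IsSMulRegular ((R ⧸ I) ⧸ J • (⊤ : Submodule R (R ⧸ I))) x ↔
      ∀ f, x * f ∈ I ⊔ J → f ∈ I ⊔ J := by
  simp only [isSMulRegular_quotient_iff_mem_of_smul_mem, Ideal.Quotient.mk_surjective.forall,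
    Algebra.smul_def, Ideal.Quotient.algebraMap_eq, ← map_mul, Ideal.Quotient.mk_mem_smul_top_iff]

theorem Ideal.Quotient.top_ne_smul_top_iff (I J : Ideal R) :
    (⊤ : Submodule R (R ⧸ I)) ≠ J • ⊤ ↔ I ⊔ J ≠ ⊤ := by
  rw [ne_comm, Ne, Ne, Submodule.eq_top_iff', Submodule.eq_top_iff',
    Ideal.Quotient.mk_surjective.forall]
  simp only [Ideal.Quotient.mk_mem_smul_top_iff]

theorem RingTheory.Sequence.isRegular_quotient_iff (I : Ideal R) (rs : List R) :
    IsRegular (R ⧸ I) rs ↔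
      (∀ i (h : i < rs.length), ∀ f, rs[i] * f ∈ I ⊔ Ideal.ofList (rs.take i) →
        f ∈ I ⊔ Ideal.ofList (rs.take i)) ∧ I ⊔ Ideal.ofList rs ≠ ⊤ := by
  simp only [isRegular_iff, isWeaklyRegular_iff,
    Ideal.Quotient.isSMulRegular_quotient_smul_top_iff, Ideal.Quotient.top_ne_smul_top_iff]

theorem RingTheory.Sequence.IsRegular.mem_of_mul_mem_of_append_singleton {I : Ideal R}
    {rs : List R} {y : R} (h : IsRegular (R ⧸ I) (rs ++ [y])) {f : R}
    (hf : y * f ∈ I ⊔ Ideal.ofList rs) : f ∈ I ⊔ Ideal.ofList rs := by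
  have hy := ((isWeaklyRegular_append_iff _ rs [y]).mp h.toIsWeaklyRegular).2
  rw [isWeaklyRegular_singleton_iff, Ideal.Quotient.isSMulRegular_quotient_smul_top_iff] at hy
  exact hy f hf

end QuotientRegular

theorem colon_eq_of_le_colon_of_maximal_isAssociatedPrime {R M : Type*} [CommRing R]
    [IsNoetherianRing R] [AddCommGroup M] [Module R M] {Q : Ideal R}
    (hQ : ∀ P, IsAssociatedPrime P M → Q ≤ P → P = Q) {z : M} (hz : z ≠ 0)
    (hQz : Q ≤ (⊥ : Submodule R M).colon {z}) : (⊥ : Submodule R M).colon {z} = Q := by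
  obtain ⟨P, hP, hzP⟩ := exists_le_isAssociatedPrime_of_isNoetherianRing R z hz
  exact le_antisymm (hQ P hP (hQz.trans hzP) ▸ hzP) hQz

theorem List.setOf_mem_take_drop_finRange (r t i : ℕ) :
    {a | a ∈ ((List.finRange r).drop t).take i} =
      {a : Fin r | t ≤ a.val ∧ a.val < t + i} := by
  ext a
  simp only [Set.mem_ofPred_eq, List.mem_take_iff_getElem, List.getElem_drop,
    List.getElem_finRange, List.length_drop, List.length_finRange, Fin.ext_iff, Fin.val_cast]
  exact ⟨fun ⟨j, hj, h⟩ => by omega, fun h => ⟨a.val - t, by omega, by omega⟩⟩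

theorem List.setOf_mem_drop_finRange (r t : ℕ) :
    {a | a ∈ (List.finRange r).drop t} = {a : Fin r | t ≤ a.val} := by
  rw [← List.take_length (l := (List.finRange r).drop t), List.setOf_mem_take_drop_finRange]
  ext a
  simp only [Set.mem_ofPred_eq, List.length_drop, List.length_finRange]
  omega

theorem List.getElem_map_drop_finRange {r : ℕ} {α : Type*} (f : Fin r → α) {t i : ℕ}
    (h : i < (((List.finRange r).drop t).map f).length) :
    (((List.finRange r).drop t).map f)[i] = f ⟨t + i, by simp at h; omega⟩ := by
  simp

namespace MvPolynomial

section CommSemiring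

variable {σ k : Type*} [CommSemiring k]

variable (k) in
noncomputable abbrev monomialIdeal (S : Set (σ →₀ ℕ)) : Ideal (MvPolynomial σ k) :=
  Ideal.span ((fun s => monomial s 1) '' S)

theorem X_mul_monomial_one (i : σ) (m : σ →₀ ℕ) :
    X i * monomial m (1 : k) = monomial (m + Finsupp.single i 1) 1 := by
  rw [add_comm, monomial_single_add, pow_one]

theorem ofList_map_X (l : List σ) :
    Ideal.ofList (l.map (X : σ → MvPolynomial σ k)) = Ideal.span (X '' {a | a ∈ l}) := by
  simp [Ideal.ofList, Set.image]

theorem monomialIdeal_sup_span_X (S : Set (σ →₀ ℕ)) (T : Set σ) :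
    monomialIdeal k S ⊔ Ideal.span (X '' T) =
      monomialIdeal k (S ∪ (fun a => Finsupp.single a 1) '' T) := by
  simp only [monomialIdeal, ← Ideal.span_union, Set.image_union, Set.image_image]
  rfl

theorem mul_mem_sup_span_X_of_forall_X_mul_mem {I : Ideal (MvPolynomial σ k)} {T : Set σ}
    {g : MvPolynomial σ k} (hg : ∀ i ∉ T, X i * g ∈ I) {y : MvPolynomial σ k}
    (hy : y ∈ Ideal.span (Set.range (X : σ → MvPolynomial σ k))) :
    y * g ∈ I ⊔ Ideal.span (X '' T) := by
  induction hy using Submodule.span_induction with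
  | mem p hp =>
    obtain ⟨i, rfl⟩ := hp
    by_cases hi : i ∈ T
    · exact Ideal.mem_sup_right (Ideal.mul_mem_right _ _ (Ideal.subset_span ⟨i, hi, rfl⟩))
    · exact Ideal.mem_sup_left (hg i hi)
  | zero => simp
  | add a b _ _ ha hb => rw [add_mul]; exact add_mem ha hb
  | smul c a _ ha => rw [smul_mul_assoc]; exact Ideal.mul_mem_left _ c ha

variable [Nontrivial k]

theorem X_notMem_span_X_image {T : Set σ} {j : σ} (hj : j ∉ T) :
    (X j : MvPolynomial σ k) ∉ Ideal.span (X '' T) := by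
  classical
  rw [mem_ideal_span_X_image]
  simp only [support_X, Finset.mem_singleton, forall_eq, Finsupp.single_apply]
  rintro ⟨i, hi, hne⟩
  exact hj ((ite_ne_right_iff.mp hne).1 ▸ hi)

theorem monomial_one_mem_monomialIdeal_iff {S : Set (σ →₀ ℕ)} {m : σ →₀ ℕ} :
    monomial m (1 : k) ∈ monomialIdeal k S ↔ ∃ s ∈ S, s ≤ m := by
  classical
  simp [mem_ideal_span_monomial_image, support_monomial]

theorem mem_monomialIdeal_of_X_mul_mem {S : Set (σ →₀ ℕ)} {j : σ}
    (hS : ∀ m, monomial (m + Finsupp.single j 1) (1 : k) ∈ monomialIdeal k S →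
      monomial m 1 ∈ monomialIdeal k S)
    {f : MvPolynomial σ k} (hf : X j * f ∈ monomialIdeal k S) : f ∈ monomialIdeal k S := by
  rw [mem_ideal_span_monomial_image] at hf ⊢
  intro m hm
  have hjm := hf (Finsupp.single j 1 + m) (by rw [support_X_mul]; exact Finset.mem_map_of_mem _ hm)
  rw [add_comm, ← monomial_one_mem_monomialIdeal_iff (k := k)] at hjm
  exact monomial_one_mem_monomialIdeal_iff.mp (hS m hjm)

theorem monomial_mem_sup_span_X_of_add_single_mem {S : Set (σ →₀ ℕ)} {T : Set σ}
    {j : σ} (hj : j ∉ T) {m : σ →₀ ℕ}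
    (hS : monomial (m + Finsupp.single j 1) (1 : k) ∈ monomialIdeal k S →
      monomial m 1 ∈ monomialIdeal k S)
    (hm : monomial (m + Finsupp.single j 1) (1 : k) ∈ monomialIdeal k S ⊔ Ideal.span (X '' T)) :
    monomial m 1 ∈ monomialIdeal k S ⊔ Ideal.span (X '' T) := by
  rw [monomialIdeal_sup_span_X, monomial_one_mem_monomialIdeal_iff] at hm ⊢
  obtain ⟨s, hs | ⟨a, ha, rfl⟩, hle⟩ := hm
  · obtain ⟨s', hs', hle'⟩ := monomial_one_mem_monomialIdeal_iff.mp
      (hS (monomial_one_mem_monomialIdeal_iff.mpr ⟨s, hs, hle⟩))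
    exact ⟨s', Or.inl hs', hle'⟩
  · refine ⟨_, Or.inr ⟨a, ha, rfl⟩, ?_⟩
    have haj : j ≠ a := fun h => hj (h ▸ ha)
    simpa [Finsupp.single_le_iff, Finsupp.single_apply, haj] using hle

theorem monomial_notMem_sup_span_X {S : Set (σ →₀ ℕ)} {T : Set σ} {w : σ →₀ ℕ}
    (hwS : monomial w (1 : k) ∉ monomialIdeal k S) (hwT : ∀ a ∈ T, w a = 0) :
    monomial w (1 : k) ∉ monomialIdeal k S ⊔ Ideal.span (X '' T) := by
  rw [monomialIdeal_sup_span_X, monomial_one_mem_monomialIdeal_iff]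
  rintro ⟨s, hs | ⟨a, ha, rfl⟩, hle⟩
  · exact hwS (monomial_one_mem_monomialIdeal_iff.mpr ⟨s, hs, hle⟩)
  · simpa [hwT a ha] using Finsupp.single_le_iff.mp hle

theorem exists_monomial_notMem_of_notMem {S : Set (σ →₀ ℕ)} {f : MvPolynomial σ k}
    (hf : f ∉ monomialIdeal k S) :
    ∃ m, monomial m (1 : k) ∉ monomialIdeal k S ∧ ∀ i, X i * f ∈ monomialIdeal k S →
      monomial (m + Finsupp.single i 1) 1 ∈ monomialIdeal k S := by
  rw [mem_ideal_span_monomial_image] at hf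
  push Not at hf
  obtain ⟨m, hm, hmS⟩ := hf
  refine ⟨m, fun h => ?_, fun i hi => ?_⟩
  · obtain ⟨s, hs, hle⟩ := monomial_one_mem_monomialIdeal_iff.mp h
    exact hmS s hs hle
  · rw [mem_ideal_span_monomial_image] at hi
    rw [monomial_one_mem_monomialIdeal_iff, add_comm]
    exact hi _ (by rw [support_X_mul]; exact Finset.mem_map_of_mem _ hm)

end CommSemiring

theorem exists_monomial_of_isAssociatedPrime_span_X {σ k : Type*} [CommRing k] [Nontrivial k]
    [Finite σ] [IsNoetherianRing k] {S : Set (σ →₀ ℕ)} {T : Set σ}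
    (hT : IsAssociatedPrime (Ideal.span ((X : σ → MvPolynomial σ k) '' T))
      (MvPolynomial σ k ⧸ monomialIdeal k S)) :
    ∃ m, monomial m (1 : k) ∉ monomialIdeal k S ∧
      ∀ i ∈ T, monomial (m + Finsupp.single i 1) (1 : k) ∈ monomialIdeal k S := by
  obtain ⟨hprime, z, hz⟩ := isAssociatedPrime_iff.mp hT
  obtain ⟨f, rfl⟩ := Ideal.Quotient.mk_surjective z
  have hXf : ∀ i ∈ T, X i * f ∈ monomialIdeal k S := fun i hi => by
    have hXi : (X i : MvPolynomial σ k) ∈ Ideal.span (X '' T) :=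
      Ideal.subset_span ⟨i, hi, rfl⟩
    rw [hz, Submodule.mem_colon_singleton, Submodule.mem_bot] at hXi
    exact Ideal.Quotient.eq_zero_iff_mem.mp hXi
  have hf : f ∉ monomialIdeal k S := fun h => hprime.ne_top <| by
    rw [hz, Ideal.Quotient.eq_zero_iff_mem.mpr h, eq_top_iff]
    intro g _
    simp [Submodule.mem_colon_singleton]
  obtain ⟨m, hm, hmX⟩ := exists_monomial_notMem_of_notMem hf
  exact ⟨m, hm, fun i hi => hmX i (hXf i hi)⟩

end MvPolynomial

section BorelFixed

variable {k : Type*} {r : ℕ}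

def IsBorelFixed [CommSemiring k] (I : Ideal (MvPolynomial (Fin r) k)) : Prop :=
  ∀ (J : Fin r →₀ ℕ) (a : Fin r) (ha : a.val + 1 < r),
    monomial J (1 : k) ∈ I → 0 < J ⟨a.val + 1, ha⟩ →
    monomial (J + Finsupp.single a 1 - Finsupp.single ⟨a.val + 1, ha⟩ 1) (1 : k) ∈ I

theorem IsBorelFixed.add_single_mem_of_le [CommSemiring k] {I : Ideal (MvPolynomial (Fin r) k)}
    (hI : IsBorelFixed I) {m : Fin r →₀ ℕ} {i j : Fin r} (hij : i ≤ j)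
    (hj : monomial (m + Finsupp.single j 1) (1 : k) ∈ I) :
    monomial (m + Finsupp.single i 1) (1 : k) ∈ I := by
  obtain ⟨n, hn⟩ := Nat.exists_eq_add_of_le (Fin.le_def.mp hij)
  induction n generalizing j with
  | zero => rwa [show i = j from Fin.ext hn.symm]
  | succ n ih =>
    have hlt : i.val + n + 1 < r := hn ▸ j.isLt
    obtain rfl : (⟨i.val + n + 1, hlt⟩ : Fin r) = j := Fin.ext hn.symm
    have hmove := hI _ ⟨i.val + n, by omega⟩ hlt hj (by simp)
    rw [add_right_comm, add_tsub_cancel_right] at hmove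
    exact ih (Fin.le_def.mpr (by simp)) hmove rfl

variable [CommRing k] {I : Ideal (MvPolynomial (Fin r) k)}

theorem IsBorelFixed.exists_monomial_supported_below (hI : IsBorelFixed I) {t : ℕ}
    {w : Fin r →₀ ℕ} (hw : monomial w (1 : k) ∉ I)
    (hwX : ∀ i : Fin r, i.val < t → monomial (w + Finsupp.single i 1) (1 : k) ∈ I) :
    ∃ w' : Fin r →₀ ℕ, (∀ a : Fin r, t ≤ a.val → w' a = 0) ∧
      monomial w' (1 : k) ∉ I ∧
      ∀ i : Fin r, i.val < t → monomial (w' + Finsupp.single i 1) (1 : k) ∈ I := by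
  classical
  obtain ⟨n, hn⟩ : ∃ n, ∑ a : Fin r with t ≤ a.val, w a = n := ⟨_, rfl⟩
  induction n using Nat.strong_induction_on generalizing w with
  | _ n ih =>
  by_cases hlow : ∀ a : Fin r, t ≤ a.val → w a = 0
  · exact ⟨w, hlow, hw, hwX⟩
  push Not at hlow
  obtain ⟨j, hj, hwj⟩ := hlow
  obtain ⟨w, rfl⟩ : ∃ w', w' + Finsupp.single j 1 = w :=
    ⟨_, tsub_add_cancel_of_le (Finsupp.single_le_iff.mpr (Nat.one_le_iff_ne_zero.mpr hwj))⟩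
  have hsum : ∀ τ : Fin r,
      ∑ a : Fin r with t ≤ a.val, (w + Finsupp.single τ 1 : Fin r →₀ ℕ) a =
      ∑ a : Fin r with t ≤ a.val, w a + if t ≤ τ.val then 1 else 0 := by
    intro τ
    simp [Finset.sum_add_distrib, Finsupp.single_apply]
  have hlt : ∑ a : Fin r with t ≤ a.val, w a < n := by
    rw [← hn, hsum, if_pos hj]
    exact Nat.lt_succ_self _
  have hw : monomial w (1 : k) ∉ I := fun h =>
    hw (by rw [← X_mul_monomial_one]; exact I.mul_mem_left _ h)
  -- The monomial is `w x_j` with `j ≥ t`. Either `w x_{t-1} ∉ I`, and moving `x_j` down to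
  -- `x_{t-1}` shows it is still killed by every `x_i`, `i < t`; or `w x_{t-1} ∈ I`, and then
  -- Borel moves show that `w` itself is.
  by_cases hτ : ∃ τ : Fin r, τ.val + 1 = t ∧ monomial (w + Finsupp.single τ 1) (1 : k) ∉ I
  · obtain ⟨τ, hτt, hτI⟩ := hτ
    refine ih _ (by rwa [hsum, if_neg (by omega), add_zero]) hτI (fun i hi => ?_) rfl
    rw [add_right_comm]
    exact hI.add_single_mem_of_le (j := j) (Fin.le_def.mpr (by omega))
      (by rw [add_right_comm]; exact hwX i hi)
  · push Not at hτ
    refine ih _ hlt hw (fun i hi => ?_) rfl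
    exact hI.add_single_mem_of_le (j := ⟨t - 1, by have := i.isLt; omega⟩)
      (Fin.le_def.mpr (by simp; omega)) (hτ _ (by simp; omega))

variable [Nontrivial k] [IsNoetherianRing k]

theorem IsBorelFixed.monomial_mem_of_add_single_mem (hI : IsBorelFixed I) {t : ℕ}
    (hQ : ∀ P, IsAssociatedPrime P (MvPolynomial (Fin r) k ⧸ I) →
      Ideal.span ((X : Fin r → MvPolynomial (Fin r) k) '' {i | i.val < t}) ≤ P →
      P = Ideal.span (X '' {i | i.val < t}))
    {j : Fin r} (hj : t ≤ j.val) {m : Fin r →₀ ℕ}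
    (hm : monomial (m + Finsupp.single j 1) (1 : k) ∈ I) : monomial m (1 : k) ∈ I := by
  by_contra hmI
  set z := Ideal.Quotient.mk I (monomial m 1)
  have hkill : ∀ i : Fin r, i ≤ j →
      (X i : MvPolynomial (Fin r) k) ∈
        (⊥ : Submodule _ (MvPolynomial (Fin r) k ⧸ I)).colon {z} := by
    intro i hij
    rw [Submodule.mem_colon_singleton, Submodule.mem_bot]
    change Ideal.Quotient.mk I (X i * monomial m 1) = 0
    rw [X_mul_monomial_one, Ideal.Quotient.eq_zero_iff_mem]
    exact hI.add_single_mem_of_le hij hm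
  have hQz : Ideal.span (X '' {i : Fin r | i.val < t}) ≤ (⊥ : Submodule _ _).colon {z} :=
    Ideal.span_le.mpr <| Set.image_subset_iff.mpr fun i hi =>
      hkill i (Fin.le_def.mpr (by simp only [Set.mem_ofPred_eq] at hi; omega))
  have hXj := hkill j le_rfl
  rw [colon_eq_of_le_colon_of_maximal_isAssociatedPrime hQ
    (fun h => hmI (Ideal.Quotient.eq_zero_iff_mem.mp h)) hQz] at hXj
  exact X_notMem_span_X_image (by simpa using hj) hXj

theorem IsBorelFixed.mem_sup_span_X_of_X_mul_mem {S : Set (Fin r →₀ ℕ)}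
    (hI : IsBorelFixed (monomialIdeal k S)) {t : ℕ}
    (hQ : ∀ P, IsAssociatedPrime P (MvPolynomial (Fin r) k ⧸ monomialIdeal k S) →
      Ideal.span ((X : Fin r → MvPolynomial (Fin r) k) '' {i | i.val < t}) ≤ P →
      P = Ideal.span (X '' {i | i.val < t}))
    {j : Fin r} (hj : t ≤ j.val) {f : MvPolynomial (Fin r) k}
    (hf : X j * f ∈
      monomialIdeal k S ⊔ Ideal.span (X '' {a : Fin r | t ≤ a.val ∧ a.val < j.val})) :
    f ∈ monomialIdeal k S ⊔ Ideal.span (X '' {a : Fin r | t ≤ a.val ∧ a.val < j.val}) := by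
  rw [monomialIdeal_sup_span_X] at hf ⊢
  refine mem_monomialIdeal_of_X_mul_mem (fun m hm => ?_) hf
  rw [← monomialIdeal_sup_span_X] at hm ⊢
  exact monomial_mem_sup_span_X_of_add_single_mem (by simp)
    (hI.monomial_mem_of_add_single_mem hQ hj) hm

end BorelFixed

theorem isRegular_map_X_drop_finRange {k : Type*} [CommRing k] {r t : ℕ}
    {I : Ideal (MvPolynomial (Fin r) k)}
    (hX : ∀ j : Fin r, t ≤ j.val → ∀ f : MvPolynomial (Fin r) k,
      X j * f ∈ I ⊔ Ideal.span (X '' {a : Fin r | t ≤ a.val ∧ a.val < j.val}) →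
      f ∈ I ⊔ Ideal.span (X '' {a : Fin r | t ≤ a.val ∧ a.val < j.val}))
    (hne : I ⊔ Ideal.span (X '' {a : Fin r | t ≤ a.val}) ≠ ⊤) :
    IsRegular (MvPolynomial (Fin r) k ⧸ I)
      (((List.finRange r).drop t).map (X : Fin r → MvPolynomial (Fin r) k)) := by
  refine (isRegular_quotient_iff I _).mpr ⟨fun i hi f hf => ?_, ?_⟩
  · rw [List.getElem_map_drop_finRange] at hf
    rw [← List.map_take, ofList_map_X, List.setOf_mem_take_drop_finRange] at hf ⊢
    exact hX ⟨t + i, by simp at hi; omega⟩ (Nat.le_add_right t i) f hf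
  rwa [ofList_map_X, List.setOf_mem_drop_finRange]

theorem borel_fixed_maximal_regular_sequence_general {k : Type*} [Field k] {r : ℕ}
    (I : Ideal (MvPolynomial (Fin r) k))
    (hmono : ∃ S : Set (Fin r →₀ ℕ), I = Ideal.span ((fun J => monomial J (1 : k)) '' S))
    (hborel : ∀ (J : Fin r →₀ ℕ) (a : Fin r) (ha : a.val + 1 < r),
      monomial J (1 : k) ∈ I → 0 < J ⟨a.val + 1, ha⟩ →
      monomial (J + Finsupp.single a 1 - Finsupp.single ⟨a.val + 1, ha⟩ 1) (1 : k) ∈ I)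
    (t : ℕ)
    (hQ : IsAssociatedPrime
      (Ideal.span ((fun i => (X i : MvPolynomial (Fin r) k)) '' {i : Fin r | i.val < t}))
      (MvPolynomial (Fin r) k ⧸ I))
    (hQmax : ∀ Q, IsAssociatedPrime Q (MvPolynomial (Fin r) k ⧸ I) →
      Ideal.span ((fun i => (X i : MvPolynomial (Fin r) k)) '' {i : Fin r | i.val < t}) ≤ Q →
      Q = Ideal.span ((fun i => (X i : MvPolynomial (Fin r) k)) '' {i : Fin r | i.val < t})) :
    RingTheory.Sequence.IsRegular (MvPolynomial (Fin r) k ⧸ I)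
        (((List.finRange r).drop t).map (fun i => (X i : MvPolynomial (Fin r) k))) ∧
      ∀ y ∈ Ideal.span (Set.range (X : Fin r → MvPolynomial (Fin r) k)),
        ¬ RingTheory.Sequence.IsRegular (MvPolynomial (Fin r) k ⧸ I)
          ((((List.finRange r).drop t).map (fun i => (X i : MvPolynomial (Fin r) k))) ++ [y]) := by
  obtain ⟨S, rfl⟩ := hmono
  obtain ⟨m, hm, hmX⟩ := exists_monomial_of_isAssociatedPrime_span_X hQ
  obtain ⟨w, hwlow, hw, hwX⟩ := IsBorelFixed.exists_monomial_supported_below hborel hm hmX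
  have hwJ := monomial_notMem_sup_span_X (T := {a : Fin r | t ≤ a.val}) hw hwlow
  have hofList :
      Ideal.ofList (((List.finRange r).drop t).map (X : Fin r → MvPolynomial (Fin r) k)) =
        Ideal.span (X '' {a : Fin r | t ≤ a.val}) := by
    rw [ofList_map_X, List.setOf_mem_drop_finRange]
  refine ⟨isRegular_map_X_drop_finRange
    (fun j hj f => IsBorelFixed.mem_sup_span_X_of_X_mul_mem hborel hQmax hj)
    (fun h => hwJ (h ▸ Submodule.mem_top)), fun y hy hreg => hwJ ?_⟩
  rw [← hofList]
  refine hreg.mem_of_mul_mem_of_append_singleton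
    (hofList ▸ mul_mem_sup_span_X_of_forall_X_mul_mem (fun i hi => ?_) hy)
  rw [X_mul_monomial_one]
  exact hwX i (by simpa using hi)

/-- If `I` is a Borel-fixed monomial ideal and `Q = (x_1,...,x_t)` is a maximal
associated prime of `R/I`, then `x_{t+1},...,x_r` form a maximal `R/I`-regular sequence inside
the maximal ideal `(x_1,...,x_r)`. -/
theorem borel_fixed_maximal_regular_sequence {k : Type*} [Field k] {r : ℕ}
    (I : Ideal (MvPolynomial (Fin r) k))
    (hmono : ∃ S : Set (Fin r →₀ ℕ), I = Ideal.span ((fun J => monomial J (1 : k)) '' S))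
    (hborel : ∀ (J : Fin r →₀ ℕ) (a : Fin r) (ha : a.val + 1 < r),
      monomial J (1 : k) ∈ I → 0 < J ⟨a.val + 1, ha⟩ →
      monomial (J + Finsupp.single a 1 - Finsupp.single ⟨a.val + 1, ha⟩ 1) (1 : k) ∈ I)
    (t : ℕ) (ht : t ≤ r)
    (hQ : IsAssociatedPrime
      (Ideal.span ((fun i => (X i : MvPolynomial (Fin r) k)) '' {i : Fin r | i.val < t}))
      (MvPolynomial (Fin r) k ⧸ I))
    (hQmax : ∀ Q, IsAssociatedPrime Q (MvPolynomial (Fin r) k ⧸ I) →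
      Ideal.span ((fun i => (X i : MvPolynomial (Fin r) k)) '' {i : Fin r | i.val < t}) ≤ Q →
      Q = Ideal.span ((fun i => (X i : MvPolynomial (Fin r) k)) '' {i : Fin r | i.val < t})) :
    RingTheory.Sequence.IsRegular (MvPolynomial (Fin r) k ⧸ I)
        (((List.finRange r).drop t).map (fun i => (X i : MvPolynomial (Fin r) k))) ∧
      ∀ y ∈ Ideal.span (Set.range (X : Fin r → MvPolynomial (Fin r) k)),
        ¬ RingTheory.Sequence.IsRegular (MvPolynomial (Fin r) k ⧸ I)
          ((((List.finRange r).drop t).map (fun i => (X i : MvPolynomial (Fin r) k))) ++ [y]) :=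
  borel_fixed_maximal_regular_sequence_general I hmono hborel t hQ hQmax
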